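/- Let Ω ⊂ ℝⁿ be a bounded measurable set, let Φ : ℝⁿ → [0,∞) be an n-dimensional N-function of class C¹ with Young conjugate Φ_•, let U : Ω → ℝⁿ be measurable with ∫_Ω Φ(U(x)) dx < ∞, and let V : Ω → ℝⁿ be measurable with ∫_Ω Φ(λ V(x)) dx < ∞ for every λ > 0. Then for every ε ∈ (0,1] one has ∫_Ω Φ_•(∇Φ((1−ε)U(x) + V(x))) dx < ∞. -/

import Mathlib

open MeasureTheory Filter Topology
open scoped RealInnerProductSpace ENNReal

/-- An `n`-dimensional (finite-valued) Young function: an even, convex function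
`Φ : ℝⁿ → [0,∞)` with `Φ(0) = 0` such that for every `t > 0` the sublevel set
`{ξ : Φ ξ < t}` is bounded and is a neighborhood of `0`. -/
structure IsYoungFunction {n : ℕ} (Φ : EuclideanSpace ℝ (Fin n) → ℝ) : Prop where
  nonneg : ∀ ξ, 0 ≤ Φ ξ
  even : ∀ ξ, Φ (-ξ) = Φ ξ
  convex : ConvexOn ℝ Set.univ Φ
  map_zero : Φ 0 = 0
  sublevel_bounded : ∀ t > 0, Bornology.IsBounded {ξ | Φ ξ < t}
  sublevel_mem_nhds : ∀ t > 0, {ξ | Φ ξ < t} ∈ 𝓝 (0 : EuclideanSpace ℝ (Fin n))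

/-- An `n`-dimensional `N`-function: a finite-valued Young function vanishing only
at `0`, with `Φ(ξ)/|ξ| → ∞` as `|ξ| → ∞` and `Φ(ξ)/|ξ| → 0` as `|ξ| → 0`. -/
structure IsNFunction {n : ℕ} (Φ : EuclideanSpace ℝ (Fin n) → ℝ)
    extends IsYoungFunction Φ : Prop where
  eq_zero : ∀ ξ, Φ ξ = 0 → ξ = 0
  tendsto_atTop : Tendsto (fun ξ => Φ ξ / ‖ξ‖)
    (Bornology.cobounded (EuclideanSpace ℝ (Fin n))) atTop
  tendsto_zero : Tendsto (fun ξ => Φ ξ / ‖ξ‖)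
    (𝓝[≠] (0 : EuclideanSpace ℝ (Fin n))) (𝓝 0)

/-- The Young conjugate `Φ_•(η) = sup_ξ (ξ·η − Φ(ξ))`, with values in `[0,∞]`
(the supremum is always nonnegative, since `ξ = 0` contributes `0`). -/
noncomputable def youngConj {n : ℕ} (Φ : EuclideanSpace ℝ (Fin n) → ℝ)
    (η : EuclideanSpace ℝ (Fin n)) : ℝ≥0∞ :=
  ⨆ ξ : EuclideanSpace ℝ (Fin n), ENNReal.ofReal (⟪ξ, η⟫ - Φ ξ)

/-!
For a convex differentiable `Φ ≥ 0`, the gradient inequality `⟪∇Φ ξ, ζ - ξ⟫ ≤ Φ ζ - Φ ξ`, used at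
`ζ` and at `λξ`, gives `Φ_•(∇Φ ξ) ≤ Φ(λξ)/(λ - 1)` for every `λ > 1`. With `λ = 2/(2 - ε)`, the point
`λ((1 - ε)U + V)` is a convex combination of `U` and `(2/ε)V`, so the integrand is bounded by
`(2(1 - ε)/ε) Φ(U) + Φ((2/ε)V)`, which is integrable on `Ω`.
-/

lemma ConvexOn.apply_sub_le_of_hasFDerivAt {E : Type*} [NormedAddCommGroup E] [NormedSpace ℝ E]
    {f : E → ℝ} {f' : E →L[ℝ] ℝ} {x : E} (hf : ConvexOn ℝ Set.univ f) (hx : HasFDerivAt f f' x)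
    (y : E) : f' (y - x) ≤ f y - f x := by
  have hline : ConvexOn ℝ Set.univ (f ∘ (AffineMap.lineMap x y : ℝ →ᵃ[ℝ] E)) := by
    simpa using hf.comp_affineMap (AffineMap.lineMap x y : ℝ →ᵃ[ℝ] E)
  have hderiv : HasDerivAt (f ∘ (AffineMap.lineMap x y : ℝ →ᵃ[ℝ] E)) (f' (y - x)) 0 := by
    have hx0 : HasFDerivAt f f' (AffineMap.lineMap x y (0 : ℝ)) := by
      rwa [AffineMap.lineMap_apply_zero]
    exact hx0.comp_hasDerivAt 0 AffineMap.hasDerivAt_lineMap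
  simpa [slope_def_field] using
    hline.le_slope_of_hasDerivAt (Set.mem_univ 0) (Set.mem_univ 1) zero_lt_one hderiv

lemma ConvexOn.inner_sub_le_div_sub_one_of_hasGradientAt {E : Type*} [NormedAddCommGroup E]
    [InnerProductSpace ℝ E] [CompleteSpace E] {f : E → ℝ} {g x : E}
    (hf : ConvexOn ℝ Set.univ f) (hx : HasGradientAt f g x) (hfx : 0 ≤ f x)
    {lam : ℝ} (hlam : 1 < lam) (y : E) : ⟪y, g⟫ - f y ≤ f (lam • x) / (lam - 1) := by
  have hy := hf.apply_sub_le_of_hasFDerivAt hx.hasFDerivAt y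
  have hlx := hf.apply_sub_le_of_hasFDerivAt hx.hasFDerivAt (lam • x)
  simp only [InnerProductSpace.toDual_apply_apply, inner_sub_right] at hy hlx
  rw [real_inner_smul_right] at hlx
  rw [le_div_iff₀ (by linarith), real_inner_comm]
  calc (⟪g, y⟫ - f y) * (lam - 1) ≤ (⟪g, x⟫ - f x) * (lam - 1) :=
        mul_le_mul_of_nonneg_right (by linarith) (by linarith)
    _ ≤ f (lam • x) - lam * f x := by linarith
    _ ≤ f (lam • x) := sub_le_self _ (by positivity)

lemma youngConj_gradient_le {n : ℕ} {Φ : EuclideanSpace ℝ (Fin n) → ℝ}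
    (hΦ : ConvexOn ℝ Set.univ Φ) {ξ : EuclideanSpace ℝ (Fin n)} (hξ : DifferentiableAt ℝ Φ ξ)
    (hΦξ : 0 ≤ Φ ξ) {lam : ℝ} (hlam : 1 < lam) :
    youngConj Φ (gradient Φ ξ) ≤ ENNReal.ofReal (Φ (lam • ξ) / (lam - 1)) :=
  iSup_le fun ζ => ENNReal.ofReal_le_ofReal <|
    hΦ.inner_sub_le_div_sub_one_of_hasGradientAt hξ.hasGradientAt hΦξ hlam ζ

lemma youngConj_gradient_smul_add_le {n : ℕ} {Φ : EuclideanSpace ℝ (Fin n) → ℝ}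
    (hΦ : ConvexOn ℝ Set.univ Φ) (hd : Differentiable ℝ Φ) (hnn : ∀ ξ, 0 ≤ Φ ξ)
    {ε : ℝ} (hε : ε ∈ Set.Ioc (0 : ℝ) 1) (u v : EuclideanSpace ℝ (Fin n)) :
    youngConj Φ (gradient Φ ((1 - ε) • u + v)) ≤
      ENNReal.ofReal (2 * (1 - ε) / ε) * ENNReal.ofReal (Φ u) +
        ENNReal.ofReal (Φ ((2 / ε) • v)) := by
  obtain ⟨hε0, hε1⟩ := hε
  have h2ε : 0 < 2 - ε := by linarith
  set a := 2 * (1 - ε) / (2 - ε) with ha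
  have ha0 : 0 ≤ a := div_nonneg (by linarith) h2ε.le
  have ha1 : 0 ≤ 1 - a := by
    rw [sub_nonneg, div_le_one h2ε]; linarith
  have hcomb : (2 / (2 - ε)) • ((1 - ε) • u + v) = a • u + (1 - a) • ((2 / ε) • v) := by
    rw [smul_add, smul_smul, smul_smul]
    congr 2
    · ring
    · rw [ha]; field_simp; ring
  have hconv := hΦ.2 (Set.mem_univ u) (Set.mem_univ ((2 / ε) • v)) ha0 ha1 (by ring)
  have hbound : Φ ((2 / (2 - ε)) • ((1 - ε) • u + v)) / (2 / (2 - ε) - 1) ≤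
      2 * (1 - ε) / ε * Φ u + Φ ((2 / ε) • v) := by
    rw [hcomb, show 2 / (2 - ε) - 1 = ε / (2 - ε) by field_simp; ring,
      div_le_iff₀ (by positivity)]
    calc _ ≤ a * Φ u + (1 - a) * Φ ((2 / ε) • v) := hconv
      _ = _ := by rw [ha]; field_simp; ring
  calc _ ≤ ENNReal.ofReal (Φ ((2 / (2 - ε)) • ((1 - ε) • u + v)) / (2 / (2 - ε) - 1)) :=
        youngConj_gradient_le hΦ (hd _) (hnn _) (by rw [lt_div_iff₀ (by linarith)]; linarith)
    _ ≤ _ := by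
      rw [← ENNReal.ofReal_mul (by positivity), ← ENNReal.ofReal_add
        (mul_nonneg (by positivity) (hnn u)) (hnn _)]
      exact ENNReal.ofReal_le_ofReal hbound

theorem conj_gradient_scaled_add_integrable_general {n : ℕ}
    (Ω : Set (EuclideanSpace ℝ (Fin n)))
    (Φ : EuclideanSpace ℝ (Fin n) → ℝ) (hΦ : IsNFunction Φ)
    (hC1 : ContDiff ℝ 1 Φ)
    (U V : EuclideanSpace ℝ (Fin n) → EuclideanSpace ℝ (Fin n))
    (hU : Measurable U)
    (hUΦ : ∫⁻ x in Ω, ENNReal.ofReal (Φ (U x)) < ⊤)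
    (hVΦ : ∀ lam : ℝ, 0 < lam → ∫⁻ x in Ω, ENNReal.ofReal (Φ (lam • V x)) < ⊤)
    (ε : ℝ) (hε : ε ∈ Set.Ioc (0 : ℝ) 1) :
    ∫⁻ x in Ω, youngConj Φ (gradient Φ ((1 - ε) • U x + V x)) < ⊤ := by
  have hΦU : Measurable fun x => ENNReal.ofReal (Φ (U x)) :=
    (hC1.continuous.measurable.comp hU).ennreal_ofReal
  calc ∫⁻ x in Ω, youngConj Φ (gradient Φ ((1 - ε) • U x + V x))
      ≤ ∫⁻ x in Ω, (ENNReal.ofReal (2 * (1 - ε) / ε) * ENNReal.ofReal (Φ (U x)) +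
          ENNReal.ofReal (Φ ((2 / ε) • V x))) :=
        lintegral_mono fun x => youngConj_gradient_smul_add_le hΦ.convex
          (hC1.differentiable one_ne_zero) hΦ.nonneg hε (U x) (V x)
    _ = ENNReal.ofReal (2 * (1 - ε) / ε) * (∫⁻ x in Ω, ENNReal.ofReal (Φ (U x))) +
          ∫⁻ x in Ω, ENNReal.ofReal (Φ ((2 / ε) • V x)) := by
        rw [lintegral_add_left (hΦU.const_mul _),
          lintegral_const_mul' _ _ ENNReal.ofReal_ne_top]
    _ < ⊤ := ENNReal.add_lt_top.2
        ⟨ENNReal.mul_lt_top ENNReal.ofReal_lt_top hUΦ, hVΦ _ (div_pos two_pos hε.1)⟩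

/-- If `Φ` is a `C¹` `n`-dimensional `N`-function, `U` belongs to the Orlicz
class on a bounded measurable set `Ω`, and `V` satisfies `∫_Ω Φ(λV) dx < ∞`
for every `λ > 0`, then for every `ε ∈ (0,1]` one has
`∫_Ω Φ_•(∇Φ((1−ε)U + V)) dx < ∞`. -/
theorem conj_gradient_scaled_add_integrable {n : ℕ}
    (Ω : Set (EuclideanSpace ℝ (Fin n))) (hΩm : MeasurableSet Ω)
    (hΩb : Bornology.IsBounded Ω)
    (Φ : EuclideanSpace ℝ (Fin n) → ℝ) (hΦ : IsNFunction Φ)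
    (hC1 : ContDiff ℝ 1 Φ)
    (U V : EuclideanSpace ℝ (Fin n) → EuclideanSpace ℝ (Fin n))
    (hU : Measurable U) (hV : Measurable V)
    (hUΦ : ∫⁻ x in Ω, ENNReal.ofReal (Φ (U x)) < ⊤)
    (hVΦ : ∀ lam : ℝ, 0 < lam → ∫⁻ x in Ω, ENNReal.ofReal (Φ (lam • V x)) < ⊤)
    (ε : ℝ) (hε : ε ∈ Set.Ioc (0 : ℝ) 1) :
    ∫⁻ x in Ω, youngConj Φ (gradient Φ ((1 - ε) • U x + V x)) < ⊤ :=
  conj_gradient_scaled_add_integrable_general Ω Φ hΦ hC1 U V hU hUΦ hVΦ ε hε
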